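/- arXiv:1910.05669 — 6 statements merged into one kernel-verified Lean document; each statement's English description precedes it below -/
import Mathlib

section
/- Let V : E → ℝ be twice continuously differentiable and let g ∈ E be an invertible matrix such that V(x·g) = V(x) for all x ∈ E. Then for all v, w ∈ E, D²V(g)(v·g, w) = D²V(I)(v, w·g⁻¹); equivalently, ∇²V(g)·(v·g) = (∇²V(I)·v)·(g⁻¹)ᵀ, where the operators ∇²V(g), ∇²V(I) : E → E represent the Hessian bilinear forms via the Frobenius inner product. -/
open scoped Matrix

attribute [local instance] Matrix.frobeniusNormedAddCommGroup Matrix.frobeniusNormedSpace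

/-! Right translation `x ↦ x * g` is linear, so invariance of `V` under it gives
`D²V(x)(v, w) = D²V(x g)(v g, w g)`; at `x = I` with `w` replaced by `w g⁻¹` this is the claim. -/

theorem fderiv_fderiv_eq_of_comp_eq {𝕜 E F : Type*} [NontriviallyNormedField 𝕜]
    [NormedAddCommGroup E] [NormedSpace 𝕜 E] [NormedAddCommGroup F] [NormedSpace 𝕜 F]
    (L : E →L[𝕜] E) {f : E → F} (hf : ContDiff 𝕜 2 f) (hfL : f ∘ L = f) (x v w : E) :
    fderiv 𝕜 (fderiv 𝕜 f) x v w = fderiv 𝕜 (fderiv 𝕜 f) (L x) (L v) (L w) := by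
  have h := congrArg (fun M => M ![v, w]) (L.iteratedFDeriv_comp_right hf x le_rfl)
  rw [hfL] at h
  simpa [iteratedFDeriv_two_apply] using h

/-- **Lemma 1(c)**: if a `C²` function `V` on real `n × n` matrices is invariant under right
translation by an invertible matrix `g`, i.e. `V (x * g) = V x` for all `x`, then its second
derivative satisfies `D²V(g)(v·g, w) = D²V(I)(v, w·g⁻¹)` for all `v, w`. -/
theorem hessian_right_translation {n : ℕ} (V : Matrix (Fin n) (Fin n) ℝ → ℝ)
    (hV : ContDiff ℝ 2 V)
    (g : Matrix (Fin n) (Fin n) ℝ) (hg : IsUnit g)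
    (hinv : ∀ x, V (x * g) = V x) :
    ∀ v w : Matrix (Fin n) (Fin n) ℝ,
      fderiv ℝ (fderiv ℝ V) g (v * g) w = fderiv ℝ (fderiv ℝ V) 1 v (w * g⁻¹) := by
  intro v w
  have hdet : IsUnit g.det := (Matrix.isUnit_iff_isUnit_det g).mp hg
  calc fderiv ℝ (fderiv ℝ V) g (v * g) w
      = fderiv ℝ (fderiv ℝ V) (1 * g) (v * g) (w * g⁻¹ * g) := by
        rw [Matrix.one_mul, Matrix.nonsing_inv_mul_cancel_right g w hdet]
    _ = fderiv ℝ (fderiv ℝ V) 1 v (w * g⁻¹) := by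
        exact (fderiv_fderiv_eq_of_comp_eq (LinearMap.mulRight ℝ g).toContinuousLinearMap
          hV (funext hinv) 1 v (w * g⁻¹)).symm
end

section
/- Let 𝔤 ⊆ E be a linear subspace with orthogonal complement 𝔤ᗮ and orthogonal projection P⊥ : E → 𝔤ᗮ. Let H : E → E be a self-adjoint linear map satisfying H(𝔤ᗮ) ⊆ 𝔤ᗮ and λ_min‖y‖² ≤ ⟨H·y, y⟩ ≤ λ_max‖y‖² for all y ∈ 𝔤ᗮ, with 0 < λ_min ≤ λ_max. Let α > 0, let g₀ : ℝ → E satisfy c₁·I ≼ g₀(t)·g₀(t)ᵀ ≼ c₂·I for all t with 0 < c₁ ≤ c₂, and let e : ℝ → E be differentiable with e(t) ∈ 𝔤ᗮ and e'(t) = −α·P⊥((H·e(t))·(g₀(t)·g₀(t)ᵀ)⁻¹) for all t. Define 𝒱(y) = (1/2)⟨H·y, y⟩. Then for all t, (d/dt) 𝒱(e(t)) ≤ −(2·α·λ_min/c₂)·𝒱(e(t)). -/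
open scoped Matrix

attribute [local instance] Matrix.frobeniusNormedAddCommGroup Matrix.frobeniusNormedSpace

/-- The Frobenius inner product `⟨A, B⟩ = trace (Aᵀ B)` on real `n × n` matrices. -/
def fip {n : ℕ} (A B : Matrix (Fin n) (Fin n) ℝ) : ℝ := (Aᵀ * B).trace

/-- The orthogonal complement of a subspace of real `n × n` matrices with respect to the
Frobenius inner product. -/
def mperp {n : ℕ} (g : Submodule ℝ (Matrix (Fin n) (Fin n) ℝ)) :
    Submodule ℝ (Matrix (Fin n) (Fin n) ℝ) where
  carrier := {y | ∀ v ∈ g, fip v y = 0}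
  add_mem' := by
    intro a b ha hb v hv
    have ha' := ha v hv
    have hb' := hb v hv
    simp only [fip] at *
    rw [Matrix.mul_add, Matrix.trace_add, ha', hb', add_zero]
  zero_mem' := by
    intro v hv
    simp [fip]
  smul_mem' := by
    intro c a ha v hv
    have ha' := ha v hv
    simp only [fip] at *
    rw [Matrix.mul_smul, Matrix.trace_smul, ha', smul_zero]

section Aux

variable {n : ℕ}

lemma fip_eq_sum (A B : Matrix (Fin n) (Fin n) ℝ) :
    fip A B = ∑ i, ∑ k, A k i * B k i := by
  simp [fip, Matrix.trace, Matrix.diag, Matrix.mul_apply, Matrix.transpose_apply]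

lemma fip_comm (A B : Matrix (Fin n) (Fin n) ℝ) : fip A B = fip B A := by
  simp [fip_eq_sum, mul_comm]

lemma fip_add_right (A B C : Matrix (Fin n) (Fin n) ℝ) :
    fip A (B + C) = fip A B + fip A C := by
  simp [fip_eq_sum, mul_add, Finset.sum_add_distrib]

lemma fip_smul_right (c : ℝ) (A B : Matrix (Fin n) (Fin n) ℝ) :
    fip A (c • B) = c * fip A B := by
  simp [fip_eq_sum, Finset.mul_sum, mul_left_comm]

lemma fip_sub_right (A B C : Matrix (Fin n) (Fin n) ℝ) :
    fip A (B - C) = fip A B - fip A C := by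
  simp [fip_eq_sum, mul_sub, Finset.sum_sub_distrib]

lemma fip_sub_left (A B C : Matrix (Fin n) (Fin n) ℝ) :
    fip (A - B) C = fip A C - fip B C := by
  rw [fip_comm, fip_sub_right, fip_comm C A, fip_comm C B]

lemma fip_smul_left (c : ℝ) (A B : Matrix (Fin n) (Fin n) ℝ) :
    fip (c • A) B = c * fip A B := by
  rw [fip_comm, fip_smul_right, fip_comm]

lemma fip_self_nonneg (A : Matrix (Fin n) (Fin n) ℝ) : 0 ≤ fip A A := by
  rw [fip_eq_sum]
  exact Finset.sum_nonneg fun i _ =>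
    Finset.sum_nonneg fun k _ => mul_self_nonneg _

lemma norm_sq_eq_fip (A : Matrix (Fin n) (Fin n) ℝ) : ‖A‖ ^ 2 = fip A A := by
  have h : ‖A‖ = (∑ i, ∑ j, ‖A i j‖ ^ (2 : ℝ)) ^ (1 / 2 : ℝ) :=
    Matrix.frobenius_norm_def A
  have hs : (∑ i, ∑ j, ‖A i j‖ ^ (2 : ℝ)) = fip A A := by
    rw [fip_eq_sum, Finset.sum_comm]
    congr 1; ext i; congr 1; ext j
    rw [Real.rpow_two, Real.norm_eq_abs, sq_abs, sq]
  have hnn : (0:ℝ) ≤ fip A A := fip_self_nonneg A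
  rw [h, hs, ← Real.rpow_natCast (_ ^ (1/2:ℝ)) 2, ← Real.rpow_mul hnn]
  norm_num

lemma psd_trace_nonneg {A : Matrix (Fin n) (Fin n) ℝ} (hA : A.PosSemidef) :
    0 ≤ A.trace := by
  rw [Matrix.trace]
  refine Finset.sum_nonneg fun i _ => ?_
  have := hA.dotProduct_mulVec_nonneg (Pi.single i 1)
  simpa [dotProduct, Matrix.mulVec, Pi.single_apply, Matrix.diag] using this

lemma psd_smul {A : Matrix (Fin n) (Fin n) ℝ} (hA : A.PosSemidef) {c : ℝ} (hc : 0 ≤ c) :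
    (c • A).PosSemidef := by
  refine Matrix.PosSemidef.of_dotProduct_mulVec_nonneg ?_ ?_
  · show (c • A)ᴴ = c • A
    rw [Matrix.conjTranspose_smul, star_trivial, hA.1]
  · intro x
    rw [Matrix.smul_mulVec, dotProduct_smul, smul_eq_mul]
    exact mul_nonneg hc (hA.dotProduct_mulVec_nonneg x)

lemma smul_one_posDef {c : ℝ} (hc : 0 < c) :
    ((c • 1 : Matrix (Fin n) (Fin n) ℝ)).PosDef := by
  refine Matrix.PosDef.of_dotProduct_mulVec_pos ?_ ?_
  · show (c • (1 : Matrix (Fin n) (Fin n) ℝ))ᴴ = c • 1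
    rw [Matrix.conjTranspose_smul, star_trivial, Matrix.conjTranspose_one]
  · intro x hx
    rw [Matrix.smul_mulVec, Matrix.one_mulVec, dotProduct_smul, smul_eq_mul]
    have hxx : 0 < dotProduct (star x) x := by
      simpa using Matrix.dotProduct_star_self_pos_iff.mpr hx
    exact mul_pos hc hxx

/-- If `G` is positive definite with `c₂ • 1 - G` PSD and `c₂ > 0`,
then `G⁻¹ - c₂⁻¹ • 1` is PSD. -/
lemma inv_sub_smul_one_psd {G : Matrix (Fin n) (Fin n) ℝ} (hG : G.PosDef)
    {c₂ : ℝ} (hc₂ : 0 < c₂) (hle : ((c₂ • 1 : Matrix (Fin n) (Fin n) ℝ) - G).PosSemidef) :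
    (G⁻¹ - c₂⁻¹ • (1 : Matrix (Fin n) (Fin n) ℝ)).PosSemidef := by
  have hdet : IsUnit G.det := hG.det_pos.ne'.isUnit
  have hGG : G * G⁻¹ = 1 := Matrix.mul_nonsing_inv G hdet
  have hGG' : G⁻¹ * G = 1 := Matrix.nonsing_inv_mul G hdet
  obtain ⟨S, hSPSD, hSS⟩ : ∃ S : Matrix (Fin n) (Fin n) ℝ, S.PosSemidef ∧ S * S = G :=
    open scoped MatrixOrder in
    ⟨CFC.sqrt G, Matrix.nonneg_iff_posSemidef.mp (CFC.sqrt_nonneg G), CFC.sqrt_mul_sqrt_self G hG.posSemidef.nonneg⟩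
  have hSH : Sᴴ = S := hSPSD.1
  -- K := S (c₂ 1 - G) S is PSD and equals c₂ • G - G * G
  have hK : (S * ((c₂ • 1 : Matrix (Fin n) (Fin n) ℝ) - G) * Sᴴ).PosSemidef :=
    hle.mul_mul_conjTranspose_same S
  have hKeq : S * ((c₂ • 1 : Matrix (Fin n) (Fin n) ℝ) - G) * Sᴴ
      = c₂ • G - G * G := by
    rw [hSH, Matrix.mul_sub, Matrix.sub_mul, mul_smul_comm, Matrix.mul_one,
      smul_mul_assoc, hSS]
    congr 1
    calc S * G * S = S * (S * S) * S := by rw [hSS]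
      _ = (S * S) * (S * S) := by noncomm_ring
      _ = G * G := by rw [hSS]
  rw [hKeq] at hK
  have hK' : (c₂⁻¹ • (c₂ • G - G * G)).PosSemidef := psd_smul hK (by positivity)
  have h2 : (G⁻¹ * (c₂⁻¹ • (c₂ • G - G * G)) * (G⁻¹)ᴴ).PosSemidef :=
    hK'.mul_mul_conjTranspose_same G⁻¹
  have hGinvH : (G⁻¹)ᴴ = G⁻¹ := by
    have : Gᴴ = G := hG.1
    rw [Matrix.conjTranspose_nonsing_inv, this]
  have hX : G⁻¹ * (c₂ • G - G * G) * G⁻¹ = c₂ • G⁻¹ - 1 := by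
    rw [Matrix.mul_sub, Matrix.sub_mul, mul_smul_comm, hGG', smul_mul_assoc,
      Matrix.one_mul, ← Matrix.mul_assoc _ G G, hGG', Matrix.one_mul, hGG]
  have heq : G⁻¹ * (c₂⁻¹ • (c₂ • G - G * G)) * (G⁻¹)ᴴ
      = G⁻¹ - c₂⁻¹ • (1 : Matrix (Fin n) (Fin n) ℝ) := by
    rw [hGinvH, mul_smul_comm, smul_mul_assoc, hX, smul_sub, smul_smul,
      inv_mul_cancel₀ hc₂.ne', one_smul]
  rwa [heq] at h2

end Aux

/-- The Lyapunov decrease inequality in the proof of **Theorem 1**: along the linearized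
transversal tracking-error dynamics `e' = -α P⊥((H e)(g₀ g₀ᵀ)⁻¹)`, the Lyapunov function
`𝒱(y) = (1/2)⟨H y, y⟩` satisfies `d/dt 𝒱(e(t)) ≤ -(2 α λmin / c₂) 𝒱(e(t))`. -/
theorem lyapunov_decrease_transversal {n : ℕ}
    (𝔤 : Submodule ℝ (Matrix (Fin n) (Fin n) ℝ))
    (P : Matrix (Fin n) (Fin n) ℝ →ₗ[ℝ] Matrix (Fin n) (Fin n) ℝ)
    (hP : ∀ x, P x ∈ mperp 𝔤 ∧ x - P x ∈ 𝔤)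
    (H : Matrix (Fin n) (Fin n) ℝ →ₗ[ℝ] Matrix (Fin n) (Fin n) ℝ)
    (hsa : ∀ v w, fip (H v) w = fip v (H w))
    (hHperp : ∀ y ∈ mperp 𝔤, H y ∈ mperp 𝔤)
    (lmin lmax : ℝ) (hlmin : 0 < lmin) (hlminmax : lmin ≤ lmax)
    (hbound : ∀ y ∈ mperp 𝔤,
      lmin * ‖y‖ ^ 2 ≤ fip (H y) y ∧ fip (H y) y ≤ lmax * ‖y‖ ^ 2)
    (α : ℝ) (hα : 0 < α)
    (c₁ c₂ : ℝ) (hc₁ : 0 < c₁) (hc₁₂ : c₁ ≤ c₂)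
    (g₀ : ℝ → Matrix (Fin n) (Fin n) ℝ)
    (hg₀ : ∀ t, (g₀ t * (g₀ t)ᵀ - c₁ • 1).PosSemidef ∧
      ((c₂ • 1 : Matrix (Fin n) (Fin n) ℝ) - g₀ t * (g₀ t)ᵀ).PosSemidef)
    (e : ℝ → Matrix (Fin n) (Fin n) ℝ)
    (he : ∀ t, e t ∈ mperp 𝔤)
    (hde : ∀ t, HasDerivAt e (-α • P (H (e t) * (g₀ t * (g₀ t)ᵀ)⁻¹)) t) :
    ∀ t, deriv (fun s => (1 / 2 : ℝ) * fip (H (e s)) (e s)) t ≤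
      -(2 * α * lmin / c₂) * ((1 / 2 : ℝ) * fip (H (e t)) (e t)) := by
  intro t
  have hc₂ : (0:ℝ) < c₂ := hc₁.trans_le hc₁₂
  set G : Matrix (Fin n) (Fin n) ℝ := g₀ t * (g₀ t)ᵀ with hGdef
  set e' : Matrix (Fin n) (Fin n) ℝ := -α • P (H (e t) * G⁻¹) with he'def
  -- entry evaluation as a linear map
  let entryL : Fin n → Fin n → Matrix (Fin n) (Fin n) ℝ →ₗ[ℝ] ℝ := fun k i =>
    { toFun := fun A => A k i
      map_add' := fun _ _ => rfl
      map_smul' := fun _ _ => rfl }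
  have hlin : ∀ (L : Matrix (Fin n) (Fin n) ℝ →ₗ[ℝ] ℝ),
      HasDerivAt (fun s => L (e s)) (L e') t := by
    intro L
    exact (L.toContinuousLinearMap.hasFDerivAt).comp_hasDerivAt t (hde t)
  -- derivative of the Lyapunov function
  have hD : HasDerivAt (fun s => (1 / 2 : ℝ) * fip (H (e s)) (e s))
      ((1 / 2 : ℝ) * (fip (H e') (e t) + fip (H (e t)) e')) t := by
    have hterm : ∀ k i : Fin n, HasDerivAt (fun s => (H (e s)) k i * (e s) k i)
        ((H e') k i * (e t) k i + (H (e t)) k i * e' k i) t := by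
      intro k i
      exact (hlin ((entryL k i).comp H)).mul (hlin (entryL k i))
    have hsum : HasDerivAt (fun s => ∑ i : Fin n, ∑ k : Fin n, (H (e s)) k i * (e s) k i)
        (∑ i : Fin n, ∑ k : Fin n,
          ((H e') k i * (e t) k i + (H (e t)) k i * e' k i)) t := by
      refine HasDerivAt.fun_sum fun i _ => ?_
      exact HasDerivAt.fun_sum fun k _ => hterm k i
    have : HasDerivAt (fun s => (1 / 2 : ℝ) *
        ∑ i : Fin n, ∑ k : Fin n, (H (e s)) k i * (e s) k i)
        ((1 / 2 : ℝ) * ∑ i : Fin n, ∑ k : Fin n,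
          ((H e') k i * (e t) k i + (H (e t)) k i * e' k i)) t := hsum.const_mul _
    have hfun : (fun s => (1 / 2 : ℝ) *
        ∑ i : Fin n, ∑ k : Fin n, (H (e s)) k i * (e s) k i)
        = fun s => (1 / 2 : ℝ) * fip (H (e s)) (e s) := by
      funext s; rw [fip_eq_sum]
    have hval : (∑ i : Fin n, ∑ k : Fin n,
          ((H e') k i * (e t) k i + (H (e t)) k i * e' k i))
        = fip (H e') (e t) + fip (H (e t)) e' := by
      rw [fip_eq_sum, fip_eq_sum, ← Finset.sum_add_distrib]
      congr 1; ext i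
      rw [← Finset.sum_add_distrib]
    rw [hfun, hval] at this
    exact this
  have hderiv : deriv (fun s => (1 / 2 : ℝ) * fip (H (e s)) (e s)) t
      = fip (H (e t)) e' := by
    rw [hD.deriv]
    have : fip (H e') (e t) = fip (H (e t)) e' := by
      rw [hsa e' (e t), fip_comm]
    rw [this]; ring
  rw [hderiv]
  -- now the algebraic estimate
  have hHe : H (e t) ∈ mperp 𝔤 := hHperp (e t) (he t)
  set M : Matrix (Fin n) (Fin n) ℝ := H (e t) with hMdef
  -- projection step: fip M (P (M * G⁻¹)) = fip M (M * G⁻¹)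
  have hproj : fip M (P (M * G⁻¹)) = fip M (M * G⁻¹) := by
    have hmem : (M * G⁻¹) - P (M * G⁻¹) ∈ 𝔤 := (hP (M * G⁻¹)).2
    have h0 : fip ((M * G⁻¹) - P (M * G⁻¹)) M = 0 := hHe _ hmem
    have h0' : fip M ((M * G⁻¹) - P (M * G⁻¹)) = 0 := by rw [fip_comm]; exact h0
    rw [fip_sub_right] at h0'
    linarith
  have he'val : fip M e' = -α * fip M (M * G⁻¹) := by
    rw [he'def, fip_smul_right, hproj]
  -- G is positive definite
  have hGpd : G.PosDef := by
    have h1 : ((c₁ • 1 : Matrix (Fin n) (Fin n) ℝ)).PosDef := smul_one_posDef hc₁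
    have := Matrix.PosDef.posSemidef_add (hg₀ t).1 h1
    rwa [sub_add_cancel] at this
  have hDpsd : (G⁻¹ - c₂⁻¹ • (1 : Matrix (Fin n) (Fin n) ℝ)).PosSemidef :=
    inv_sub_smul_one_psd hGpd hc₂ (hg₀ t).2
  -- trace estimate: c₂⁻¹ * fip M M ≤ fip M (M * G⁻¹)
  have htrace : c₂⁻¹ * fip M M ≤ fip M (M * G⁻¹) := by
    have hpsd : (M * (G⁻¹ - c₂⁻¹ • (1 : Matrix (Fin n) (Fin n) ℝ)) * Mᴴ).PosSemidef :=
      hDpsd.mul_mul_conjTranspose_same M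
    have htr : 0 ≤ (M * (G⁻¹ - c₂⁻¹ • (1 : Matrix (Fin n) (Fin n) ℝ)) * Mᴴ).trace :=
      psd_trace_nonneg hpsd
    have hcalc : (M * (G⁻¹ - c₂⁻¹ • (1 : Matrix (Fin n) (Fin n) ℝ)) * Mᴴ).trace
        = fip M (M * G⁻¹) - c₂⁻¹ * fip M M := by
      have h1 : fip M (M * (G⁻¹ - c₂⁻¹ • (1 : Matrix (Fin n) (Fin n) ℝ)))
          = fip M (M * G⁻¹) - c₂⁻¹ * fip M M := by
        rw [Matrix.mul_sub, fip_sub_right, Matrix.mul_smul, fip_smul_right,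
          Matrix.mul_one]
      rw [← h1, fip]
      have : Mᴴ = Mᵀ := rfl
      rw [this, Matrix.trace_mul_comm (M * (G⁻¹ - c₂⁻¹ • (1 : Matrix (Fin n) (Fin n) ℝ))) Mᵀ]
    linarith [htr, hcalc.symm ▸ htr]
  -- coercivity: lmin * fip M (e t) ≤ fip M M
  have hcoer : lmin * fip M (e t) ≤ fip M M := by
    have hb := hbound (e t) (he t)
    have hnorm : ‖e t‖ ^ 2 = fip (e t) (e t) := norm_sq_eq_fip (e t)
    have hq1 : 0 ≤ fip (M - lmin • e t) (M - lmin • e t) := fip_self_nonneg _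
    have hq2 : lmin * fip (e t) (e t) ≤ fip M (e t) := by
      rw [← hnorm]; exact hb.1
    have hexp : fip (M - lmin • e t) (M - lmin • e t)
        = fip M M - 2 * lmin * fip M (e t) + lmin ^ 2 * fip (e t) (e t) := by
      simp only [fip_sub_left, fip_sub_right, fip_smul_left, fip_smul_right]
      rw [fip_comm (e t) M]
      ring
    nlinarith [hq1, hq2, hexp]
  -- put everything together
  rw [hMdef] at he'val htrace hcoer ⊢
  rw [he'val]
  have hfipnn : 0 ≤ fip (H (e t)) (e t) := by
    have hb := (hbound (e t) (he t)).1
    have : 0 ≤ lmin * ‖e t‖ ^ 2 := by positivity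
    linarith
  have step1 : -α * fip (H (e t)) (H (e t) * G⁻¹)
      ≤ -α * (c₂⁻¹ * fip (H (e t)) (H (e t))) := by
    have := htrace
    nlinarith
  have step2 : -α * (c₂⁻¹ * fip (H (e t)) (H (e t)))
      ≤ -α * (c₂⁻¹ * (lmin * fip (H (e t)) (e t))) := by
    have hc₂inv : (0:ℝ) < c₂⁻¹ := by positivity
    have h0 : 0 ≤ α * c₂⁻¹ * (fip (H (e t)) (H (e t)) - lmin * fip (H (e t)) (e t)) :=
      mul_nonneg (mul_pos hα hc₂inv).le (by linarith)
    nlinarith [h0]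
  calc -α * fip (H (e t)) (H (e t) * G⁻¹)
      ≤ -α * (c₂⁻¹ * (lmin * fip (H (e t)) (e t))) := step1.trans step2
    _ = -(2 * α * lmin / c₂) * ((1 / 2 : ℝ) * fip (H (e t)) (e t)) := by
        field_simp
end

section
/- Let 𝔤 ⊆ E be a linear subspace with orthogonal complement 𝔤ᗮ and orthogonal projection P⊥ : E → 𝔤ᗮ. Let H : E → E be a self-adjoint linear map satisfying H(𝔤ᗮ) ⊆ 𝔤ᗮ and λ_min‖y‖² ≤ ⟨H·y, y⟩ ≤ λ_max‖y‖² for all y ∈ 𝔤ᗮ, with 0 < λ_min ≤ λ_max. Let α > 0, let g₀ : ℝ → E satisfy c₁·I ≼ g₀(t)·g₀(t)ᵀ ≼ c₂·I for all t with 0 < c₁ ≤ c₂, and let e : ℝ → E be differentiable with e(t) ∈ 𝔤ᗮ and e'(t) = −α·P⊥((H·e(t))·(g₀(t)·g₀(t)ᵀ)⁻¹) for all t. Then for all t ≥ 0, ‖e(t)‖ ≤ √(λ_max/λ_min)·exp(−α·λ_min·t/c₂)·‖e(0)‖; in particular, e is exponentially stable to zero. -/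
open scoped Matrix

attribute [local instance] Matrix.frobeniusNormedAddCommGroup Matrix.frobeniusNormedSpace

namespace Thm1Aux

variable {n : ℕ}

lemma fip_sum (A B : Matrix (Fin n) (Fin n) ℝ) :
    fip A B = ∑ j, ∑ i, A i j * B i j := by
  simp [fip, Matrix.trace, Matrix.diag, Matrix.mul_apply, Matrix.transpose_apply]

lemma fip_comm (A B : Matrix (Fin n) (Fin n) ℝ) : fip A B = fip B A := by
  simp [fip_sum, mul_comm]

lemma fip_smul (c : ℝ) (A B : Matrix (Fin n) (Fin n) ℝ) : fip A (c • B) = c * fip A B := by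
  simp [fip, Matrix.mul_smul, Matrix.trace_smul]

lemma fip_sub (A B C : Matrix (Fin n) (Fin n) ℝ) : fip A (B - C) = fip A B - fip A C := by
  simp [fip, Matrix.mul_sub, Matrix.trace_sub]

lemma fip_self (A : Matrix (Fin n) (Fin n) ℝ) : fip A A = ‖A‖ ^ 2 := by
  have hS : (0:ℝ) ≤ ∑ i, ∑ j, ‖A i j‖ ^ (2:ℝ) := by
    refine Finset.sum_nonneg fun i _ => Finset.sum_nonneg fun j _ => ?_
    positivity
  rw [Matrix.frobenius_norm_def, ← Real.rpow_natCast (_ ^ (1/2:ℝ)) 2, ← Real.rpow_mul hS]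
  norm_num
  rw [fip_sum, Finset.sum_comm]
  refine Finset.sum_congr rfl fun i _ => Finset.sum_congr rfl fun j _ => ?_
  ring

lemma fip_le (A B : Matrix (Fin n) (Fin n) ℝ) : fip A B ≤ ‖A‖ * ‖B‖ := by
  have key : (fip A B) ^ 2 ≤ (‖A‖ * ‖B‖) ^ 2 := by
    have h2 := Finset.sum_mul_sq_le_sq_mul_sq Finset.univ
      (fun p : Fin n × Fin n => A p.1 p.2) (fun p : Fin n × Fin n => B p.1 p.2)
    have hf : ∀ C D : Matrix (Fin n) (Fin n) ℝ,
        fip C D = ∑ p : Fin n × Fin n, C p.1 p.2 * D p.1 p.2 := by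
      intro C D
      rw [fip_sum, Fintype.sum_prod_type, Finset.sum_comm]
    rw [hf A B, mul_pow, ← fip_self, ← fip_self, hf A A, hf B B]
    simpa [sq] using h2
  nlinarith [mul_nonneg (norm_nonneg A) (norm_nonneg B)]

lemma psd_smul {c : ℝ} {A : Matrix (Fin n) (Fin n) ℝ} (hc : 0 ≤ c) (hA : A.PosSemidef) :
    (c • A).PosSemidef := by
  refine ⟨?_, fun x => ?_⟩
  · show (c • A)ᴴ = c • A
    rw [Matrix.conjTranspose_smul, hA.1.eq]
    simp
  · exact (hA.smul hc).2 x

open scoped Matrix.Norms.L2Operator MatrixOrder in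
lemma psd_sqrt {A : Matrix (Fin n) (Fin n) ℝ} (hA : A.PosSemidef) :
    ∃ S : Matrix (Fin n) (Fin n) ℝ, S.PosSemidef ∧ S * S = A :=
  ⟨CFC.sqrt A, Matrix.nonneg_iff_posSemidef.mp (CFC.sqrt_nonneg A), CFC.sqrt_mul_sqrt_self A hA.nonneg⟩

lemma psd_eq_ct_mul_self {A : Matrix (Fin n) (Fin n) ℝ} (hA : A.PosSemidef) :
    ∃ B : Matrix (Fin n) (Fin n) ℝ, A = Bᴴ * B := by
  obtain ⟨S, hS, hSS⟩ := psd_sqrt hA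
  exact ⟨S, by rw [hS.1.eq, hSS]⟩

lemma trace_psd_nonneg {A : Matrix (Fin n) (Fin n) ℝ} (hA : A.PosSemidef) : 0 ≤ A.trace := by
  obtain ⟨B, rfl⟩ := psd_eq_ct_mul_self hA
  rw [Matrix.trace]
  refine Finset.sum_nonneg fun i _ => ?_
  rw [Matrix.diag_apply, Matrix.mul_apply]
  refine Finset.sum_nonneg fun k _ => ?_
  simp [Matrix.conjTranspose_apply, mul_self_nonneg]

lemma trace_mul_psd_nonneg {A B : Matrix (Fin n) (Fin n) ℝ}
    (hA : A.PosSemidef) (hB : B.PosSemidef) : 0 ≤ (A * B).trace := by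
  obtain ⟨C, rfl⟩ := psd_eq_ct_mul_self hB
  rw [← Matrix.mul_assoc, Matrix.trace_mul_comm, ← Matrix.mul_assoc]
  have hP : (C * A * Cᴴ).PosSemidef := by
    simpa [Matrix.conjTranspose_conjTranspose] using hA.conjTranspose_mul_mul_same Cᴴ
  exact trace_psd_nonneg hP

lemma smul_one_posDef {c : ℝ} (hc : 0 < c) :
    ((c • 1 : Matrix (Fin n) (Fin n) ℝ)).PosDef := by
  have h : (c • 1 : Matrix (Fin n) (Fin n) ℝ) = Matrix.diagonal (fun _ => c) := by
    ext i j
    by_cases hij : i = j <;> simp [Matrix.one_apply, Matrix.diagonal_apply, hij]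
  rw [h]
  exact Matrix.PosDef.diagonal fun _ => hc

lemma inv_sub_smul_psd {M : Matrix (Fin n) (Fin n) ℝ} (hM : M.PosDef) {c : ℝ} (hc : 0 < c)
    (h : ((c • 1 : Matrix (Fin n) (Fin n) ℝ) - M).PosSemidef) :
    (M⁻¹ - c⁻¹ • (1 : Matrix (Fin n) (Fin n) ℝ)).PosSemidef := by
  obtain ⟨S, hS, hSS⟩ := psd_sqrt hM.posSemidef
  have hdet : IsUnit S.det := by
    have hMdet : M.det ≠ 0 := hM.det_pos.ne'
    have hmul : S.det * S.det = M.det := by rw [← Matrix.det_mul, hSS]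
    have hS0 : S.det ≠ 0 := fun h0 => hMdet (by rw [← hmul, h0, zero_mul])
    exact hS0.isUnit
  have key : ((S⁻¹)ᴴ * (c⁻¹ • ((c • 1 : Matrix (Fin n) (Fin n) ℝ) - M)) * S⁻¹).PosSemidef :=
    (psd_smul (inv_nonneg.mpr hc.le) h).conjTranspose_mul_mul_same S⁻¹
  have h1 : (S⁻¹)ᴴ = S⁻¹ := by rw [Matrix.conjTranspose_nonsing_inv, hS.1.eq]
  have hMS : S⁻¹ * M * S⁻¹ = 1 := by
    rw [← hSS, ← Matrix.mul_assoc, Matrix.nonsing_inv_mul S hdet,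
      Matrix.one_mul, Matrix.mul_nonsing_inv S hdet]
  have hinv : M⁻¹ = S⁻¹ * S⁻¹ := by rw [← hSS, Matrix.mul_inv_rev]
  have expand : (S⁻¹)ᴴ * (c⁻¹ • ((c • 1 : Matrix (Fin n) (Fin n) ℝ) - M)) * S⁻¹
      = M⁻¹ - c⁻¹ • (1 : Matrix (Fin n) (Fin n) ℝ) := by
    rw [h1, smul_sub, smul_smul, inv_mul_cancel₀ hc.ne', one_smul]
    rw [Matrix.mul_sub, Matrix.sub_mul, Matrix.mul_one, hinv]
    congr 1
    rw [Matrix.mul_smul, Matrix.smul_mul]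
    rw [show S⁻¹ * M * S⁻¹ = 1 from hMS]
  rw [← expand]
  exact key
lemma hasDerivAt_entry (L : Matrix (Fin n) (Fin n) ℝ →ₗ[ℝ] Matrix (Fin n) (Fin n) ℝ)
    (e : ℝ → Matrix (Fin n) (Fin n) ℝ) (t : ℝ) (d : Matrix (Fin n) (Fin n) ℝ)
    (hde : HasDerivAt e d t) (i j : Fin n) :
    HasDerivAt (fun s => L (e s) i j) (L d i j) t := by
  let F : Matrix (Fin n) (Fin n) ℝ →ₗ[ℝ] ℝ :=
    { toFun := fun M => L M i j
      map_add' := by intros; simp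
      map_smul' := by intros; simp }
  have h := (F.toContinuousLinearMap.hasFDerivAt (x := e t)).comp_hasDerivAt t hde
  exact h

lemma hasDerivAt_fip (H : Matrix (Fin n) (Fin n) ℝ →ₗ[ℝ] Matrix (Fin n) (Fin n) ℝ)
    (e : ℝ → Matrix (Fin n) (Fin n) ℝ) (t : ℝ) (d : Matrix (Fin n) (Fin n) ℝ)
    (hde : HasDerivAt e d t) :
    HasDerivAt (fun s => fip (H (e s)) (e s)) (fip (H d) (e t) + fip (H (e t)) d) t := by
  have hterm : ∀ j i : Fin n, HasDerivAt (fun s => (H (e s)) i j * (e s) i j)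
      ((H d) i j * (e t) i j + (H (e t)) i j * d i j) t := by
    intro j i
    have h1 := hasDerivAt_entry H e t d hde i j
    have h2 := hasDerivAt_entry LinearMap.id e t d hde i j
    exact h1.mul h2
  have hsum : HasDerivAt (fun s => ∑ j, ∑ i, (H (e s)) i j * (e s) i j)
      (∑ j, ∑ i, ((H d) i j * (e t) i j + (H (e t)) i j * d i j)) t :=
    HasDerivAt.fun_sum fun j _ => HasDerivAt.fun_sum fun i _ => hterm j i
  have heq : (fun s => fip (H (e s)) (e s)) = fun s => ∑ j, ∑ i, (H (e s)) i j * (e s) i j := by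
    funext s; exact fip_sum _ _
  rw [heq, fip_sum, fip_sum]
  convert hsum using 1
  rw [← Finset.sum_add_distrib]
  refine Finset.sum_congr rfl fun j _ => ?_
  rw [← Finset.sum_add_distrib]


end Thm1Aux

/-- **Theorem 1**: the linearized transversal tracking-error dynamics
`e' = -α P⊥((H e)(g₀ g₀ᵀ)⁻¹)` is exponentially stable to zero:
`‖e(t)‖ ≤ √(λmax/λmin) exp(-α λmin t / c₂) ‖e(0)‖` for all `t ≥ 0`. -/
theorem transversal_exponentially_stable {n : ℕ}
    (𝔤 : Submodule ℝ (Matrix (Fin n) (Fin n) ℝ))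
    (P : Matrix (Fin n) (Fin n) ℝ →ₗ[ℝ] Matrix (Fin n) (Fin n) ℝ)
    (hP : ∀ x, P x ∈ mperp 𝔤 ∧ x - P x ∈ 𝔤)
    (H : Matrix (Fin n) (Fin n) ℝ →ₗ[ℝ] Matrix (Fin n) (Fin n) ℝ)
    (hsa : ∀ v w, fip (H v) w = fip v (H w))
    (hHperp : ∀ y ∈ mperp 𝔤, H y ∈ mperp 𝔤)
    (lmin lmax : ℝ) (hlmin : 0 < lmin) (hlminmax : lmin ≤ lmax)
    (hbound : ∀ y ∈ mperp 𝔤,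
      lmin * ‖y‖ ^ 2 ≤ fip (H y) y ∧ fip (H y) y ≤ lmax * ‖y‖ ^ 2)
    (α : ℝ) (hα : 0 < α)
    (c₁ c₂ : ℝ) (hc₁ : 0 < c₁) (hc₁₂ : c₁ ≤ c₂)
    (g₀ : ℝ → Matrix (Fin n) (Fin n) ℝ)
    (hg₀ : ∀ t, (g₀ t * (g₀ t)ᵀ - c₁ • 1).PosSemidef ∧
      ((c₂ • 1 : Matrix (Fin n) (Fin n) ℝ) - g₀ t * (g₀ t)ᵀ).PosSemidef)
    (e : ℝ → Matrix (Fin n) (Fin n) ℝ)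
    (he : ∀ t, e t ∈ mperp 𝔤)
    (hde : ∀ t, HasDerivAt e (-α • P (H (e t) * (g₀ t * (g₀ t)ᵀ)⁻¹)) t) :
    ∀ t : ℝ, 0 ≤ t →
      ‖e t‖ ≤ Real.sqrt (lmax / lmin) * Real.exp (-(α * lmin / c₂) * t) * ‖e 0‖ := by
  classical
  intro t ht
  have hc₂ : 0 < c₂ := lt_of_lt_of_le hc₁ hc₁₂
  set k : ℝ := 2 * α * lmin / c₂ with hk
  set d : ℝ → Matrix (Fin n) (Fin n) ℝ :=
    fun s => -α • P (H (e s) * (g₀ s * (g₀ s)ᵀ)⁻¹) with hd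
  have hde' : ∀ s, HasDerivAt e (d s) s := fun s => hde s
  set V : ℝ → ℝ := fun s => fip (H (e s)) (e s) with hV
  have hVlow : ∀ s, lmin * ‖e s‖ ^ 2 ≤ V s := fun s => (hbound _ (he s)).1
  have hVhigh : ∀ s, V s ≤ lmax * ‖e s‖ ^ 2 := fun s => (hbound _ (he s)).2
  have hV0 : ∀ s, 0 ≤ V s := fun s => le_trans (by positivity) (hVlow s)
  have hV' : ∀ s, HasDerivAt V (fip (H (d s)) (e s) + fip (H (e s)) (d s)) s :=
    fun s => Thm1Aux.hasDerivAt_fip H e s (d s) (hde' s)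
  have hDbound : ∀ s, fip (H (d s)) (e s) + fip (H (e s)) (d s) ≤ -k * V s := by
    intro s
    obtain ⟨hg1, hg2⟩ := hg₀ s
    set M := g₀ s * (g₀ s)ᵀ with hM
    set x := H (e s) * M⁻¹ with hx
    have hyp : e s ∈ mperp 𝔤 := he s
    have hHyp : H (e s) ∈ mperp 𝔤 := hHperp _ hyp
    have e1 : fip (H (d s)) (e s) = fip (H (e s)) (d s) := by
      rw [hsa, Thm1Aux.fip_comm]
    have ePx : fip (H (e s)) (P x) = fip (H (e s)) x := by
      have hmem : x - P x ∈ 𝔤 := (hP x).2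
      have h0 : fip (H (e s)) (x - P x) = 0 := by
        rw [Thm1Aux.fip_comm]; exact hHyp _ hmem
      have h1 := Thm1Aux.fip_sub (H (e s)) x (P x)
      linarith
    have e2 : fip (H (e s)) (d s) = -α * fip (H (e s)) x := by
      show fip (H (e s)) (-α • P x) = _
      rw [Thm1Aux.fip_smul, ePx]
    have hMpsd : M.PosSemidef := by
      have h := Matrix.posSemidef_self_mul_conjTranspose (g₀ s)
      rwa [Matrix.conjTranspose_eq_transpose_of_trivial] at h
    have hMpd : M.PosDef := by
      rw [show M = (M - c₁ • 1) + c₁ • (1 : Matrix (Fin n) (Fin n) ℝ) from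
        (sub_add_cancel _ _).symm]
      exact Matrix.PosDef.posSemidef_add hg1 (Thm1Aux.smul_one_posDef hc₁)
    have hNinv : (M⁻¹ - c₂⁻¹ • (1 : Matrix (Fin n) (Fin n) ℝ)).PosSemidef :=
      Thm1Aux.inv_sub_smul_psd hMpd hc₂ hg2
    have e3 : c₂⁻¹ * ‖H (e s)‖ ^ 2 ≤ fip (H (e s)) x := by
      have hAtA : ((H (e s))ᵀ * H (e s)).PosSemidef := by
        have h := Matrix.posSemidef_conjTranspose_mul_self (H (e s))
        rwa [Matrix.conjTranspose_eq_transpose_of_trivial] at h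
      have t1 : 0 ≤ (((H (e s))ᵀ * H (e s)) *
          (M⁻¹ - c₂⁻¹ • (1 : Matrix (Fin n) (Fin n) ℝ))).trace :=
        Thm1Aux.trace_mul_psd_nonneg hAtA hNinv
      have expand : ((H (e s))ᵀ * H (e s)) * (M⁻¹ - c₂⁻¹ • (1 : Matrix (Fin n) (Fin n) ℝ))
          = (H (e s))ᵀ * (H (e s) * M⁻¹) - c₂⁻¹ • ((H (e s))ᵀ * H (e s)) := by
        rw [Matrix.mul_sub, Matrix.mul_assoc, Matrix.mul_smul, Matrix.mul_one]
      rw [expand, Matrix.trace_sub, Matrix.trace_smul, sub_nonneg, smul_eq_mul] at t1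
      have hfips : c₂⁻¹ * ‖H (e s)‖ ^ 2 = c₂⁻¹ * ((H (e s))ᵀ * H (e s)).trace := by
        rw [← Thm1Aux.fip_self]; rfl
      rw [hfips]
      exact t1
    have e4 : lmin * V s ≤ ‖H (e s)‖ ^ 2 := by
      have cs : V s ≤ ‖H (e s)‖ * ‖e s‖ := Thm1Aux.fip_le _ _
      have hlow := hVlow s
      have h5 : V s * V s ≤ (‖H (e s)‖ * ‖e s‖) * (‖H (e s)‖ * ‖e s‖) :=
        mul_self_le_mul_self (hV0 s) cs
      have h6 : lmin * (V s * V s) ≤ lmin * ((‖H (e s)‖ * ‖e s‖) * (‖H (e s)‖ * ‖e s‖)) :=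
        mul_le_mul_of_nonneg_left h5 hlmin.le
      have h7 : ‖H (e s)‖ ^ 2 * (lmin * ‖e s‖ ^ 2) ≤ ‖H (e s)‖ ^ 2 * V s :=
        mul_le_mul_of_nonneg_left hlow (sq_nonneg _)
      rcases eq_or_lt_of_le (hV0 s) with h0 | hpos
      · rw [← h0, mul_zero]; positivity
      · nlinarith [h6, h7, hpos]
    have step1 : α * (c₂⁻¹ * ‖H (e s)‖ ^ 2) ≤ α * fip (H (e s)) x :=
      mul_le_mul_of_nonneg_left e3 hα.le
    have step2 : c₂⁻¹ * (lmin * V s) ≤ c₂⁻¹ * ‖H (e s)‖ ^ 2 :=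
      mul_le_mul_of_nonneg_left e4 (inv_nonneg.mpr hc₂.le)
    have step3 : α * (c₂⁻¹ * (lmin * V s)) ≤ α * (c₂⁻¹ * ‖H (e s)‖ ^ 2) :=
      mul_le_mul_of_nonneg_left step2 hα.le
    have hfin : -k * V s = 2 * (-α * (c₂⁻¹ * (lmin * V s))) := by
      rw [hk, div_eq_mul_inv]; ring
    rw [e1, e2, hfin]
    nlinarith [step1, step3]
  set W : ℝ → ℝ := fun s => V s * Real.exp (k * s) with hW
  have hW' : ∀ s, HasDerivAt W
      ((fip (H (d s)) (e s) + fip (H (e s)) (d s)) * Real.exp (k * s)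
        + V s * (Real.exp (k * s) * k)) s := by
    intro s
    have h1 : HasDerivAt (fun u : ℝ => k * u) k s := by
      simpa using (hasDerivAt_id s).const_mul k
    have hexp : HasDerivAt (fun u => Real.exp (k * u)) (Real.exp (k * s) * k) s := by
      exact (Real.hasDerivAt_exp (k * s)).comp s h1
    exact (hV' s).mul hexp
  have hWanti : Antitone W := by
    refine antitone_of_deriv_nonpos (fun s => (hW' s).differentiableAt) fun s => ?_
    rw [(hW' s).deriv]
    have hD := hDbound s
    have hE : 0 < Real.exp (k * s) := Real.exp_pos _
    nlinarith [hV0 s, mul_le_mul_of_nonneg_right hD hE.le]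
  have hVt : V t * Real.exp (k * t) ≤ V 0 := by
    have h := hWanti ht
    simpa [hW] using h
  have hVt' : V t ≤ V 0 * Real.exp (-(k * t)) := by
    have h1 : V t = (V t * Real.exp (k * t)) * Real.exp (-(k * t)) := by
      rw [mul_assoc, ← Real.exp_add]; simp
    rw [h1]
    exact mul_le_mul_of_nonneg_right hVt (Real.exp_nonneg _)
  have chain : lmin * ‖e t‖ ^ 2 ≤ lmax * ‖e 0‖ ^ 2 * Real.exp (-(k * t)) :=
    le_trans (hVlow t) (le_trans hVt'
      (mul_le_mul_of_nonneg_right (hVhigh 0) (Real.exp_nonneg _)))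
  set R := Real.sqrt (lmax / lmin) * Real.exp (-(α * lmin / c₂) * t) * ‖e 0‖ with hR
  have hRnn : 0 ≤ R := by positivity
  have hsq : ‖e t‖ ^ 2 ≤ R ^ 2 := by
    have hR2 : R ^ 2 = lmax / lmin * (Real.exp (-(α * lmin / c₂) * t)) ^ 2 * ‖e 0‖ ^ 2 := by
      rw [hR, mul_pow, mul_pow, Real.sq_sqrt (div_nonneg (le_trans hlmin.le hlminmax) hlmin.le)]
    have hexp2 : (Real.exp (-(α * lmin / c₂) * t)) ^ 2 = Real.exp (-(k * t)) := by
      rw [sq, ← Real.exp_add]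
      congr 1
      rw [hk]
      field_simp
      ring
    rw [hR2, hexp2, div_mul_eq_mul_div, div_mul_eq_mul_div, le_div_iff₀ hlmin]
    nlinarith [chain]
  calc ‖e t‖ = Real.sqrt (‖e t‖ ^ 2) := (Real.sqrt_sq (norm_nonneg _)).symm
    _ ≤ Real.sqrt (R ^ 2) := Real.sqrt_le_sqrt hsq
    _ = R := Real.sqrt_sq hRnn
end

section
/- Let 𝔤 ⊆ E be a linear subspace, let Kp, Kd ∈ E, and let g₀ : ℝ → E be differentiable with g₀(t) invertible and g₀'(t) = g₀(t)·ξ₀(t) for some ξ₀ : ℝ → 𝔤. Let ξ̃ : ℝ → 𝔤, e∥ : ℝ → E and W : ℝ → E be differentiable functions, let A : ℝ → (𝔤 → 𝔤) be a family of linear maps, and suppose: (i) e∥'(t) = g₀(t)·ξ̃(t)·g₀(t)⁻¹ + W(t); (ii) ξ̃'(t) = A(t)·ξ̃(t) + v(t), where v(t) = ξ̃(t)·ξ₀(t) − ξ₀(t)·ξ̃(t) + Y(t) − A(t)·ξ̃(t) and Y(t) = g₀(t)⁻¹·(−W'(t) + Kp·e∥(t) + Kd·(g₀(t)·ξ̃(t)·g₀(t)⁻¹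 + W(t)))·g₀(t). Then the function η(t) := g₀(t)·ξ̃(t)·g₀(t)⁻¹ + W(t) satisfies e∥'(t) = η(t) and η'(t) = Kp·e∥(t) + Kd·η(t) for all t. -/
/-!
Along a curve with `g₀' = g₀ ξ₀`, the adjoint action `Ad_{g₀} ξ = g₀ ξ g₀⁻¹` differentiates to
`Ad_{g₀}(ξ' + [ξ₀, ξ])`. The closed-loop law for `ξ̃'` is exactly `ξ̃' + [ξ₀, ξ̃] = Y`, so
`(Ad_{g₀} ξ̃)' = Ad_{g₀} Y = -W' + Kp e∥ + Kd η`, and adding `W'` gives `η' = Kp e∥ + Kd η`.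
-/

open scoped Matrix

attribute [local instance] Matrix.frobeniusNormedRing Matrix.frobeniusNormedAlgebra

section RingInverse

variable {𝕜 : Type*} [NontriviallyNormedField 𝕜] {R : Type*} [NormedRing R]
  [HasSummableGeomSeries R] [NormedAlgebra 𝕜 R] {g ξ : 𝕜 → R} {ξ₀ ξ' : R} {t : 𝕜}

theorem HasDerivAt.ringInverse {g' : R} (hg : HasDerivAt g g' t) (ht : IsUnit (g t)) :
    HasDerivAt (fun s => Ring.inverse (g s))
      (-(Ring.inverse (g t) * g' * Ring.inverse (g t))) t := by
  have h := (hasFDerivAt_ringInverse (𝕜 := 𝕜) ht.unit).comp_hasDerivAt t hg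
  simp only [← Ring.inverse_unit, IsUnit.unit_spec, neg_apply,
    ContinuousLinearMap.mulLeftRight_apply] at h
  exact h

theorem HasDerivAt.conj_ringInverse (hg : HasDerivAt g (g t * ξ₀) t) (ht : IsUnit (g t))
    (hξ : HasDerivAt ξ ξ' t) :
    HasDerivAt (fun s => g s * ξ s * Ring.inverse (g s))
      (g t * (ξ' + (ξ₀ * ξ t - ξ t * ξ₀)) * Ring.inverse (g t)) t := by
  have hcancel : Ring.inverse (g t) * (g t * ξ₀) * Ring.inverse (g t) =
      ξ₀ * Ring.inverse (g t) := by
    rw [← mul_assoc, Ring.inverse_mul_cancel _ ht, one_mul]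
  refine ((hg.mul hξ).mul (hg.ringInverse ht)).congr_deriv ?_
  rw [hcancel, Pi.mul_apply]
  noncomm_ring

end RingInverse

theorem HasDerivAt.matrix_conj {𝕜 m : Type*} [RCLike 𝕜] [Fintype m] [DecidableEq m]
    {g ξ : 𝕜 → Matrix m m 𝕜} {ξ₀ ξ' : Matrix m m 𝕜} {t : 𝕜}
    (hg : HasDerivAt g (g t * ξ₀) t) (ht : IsUnit (g t)) (hξ : HasDerivAt ξ ξ' t) :
    HasDerivAt (fun s => g s * ξ s * (g s)⁻¹)
      (g t * (ξ' + (ξ₀ * ξ t - ξ t * ξ₀)) * (g t)⁻¹) t := by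
  simp only [Matrix.nonsing_inv_eq_ringInverse]
  exact hg.conj_ringInverse ht hξ

theorem Matrix.mul_mul_nonsing_inv_conj {m α : Type*} [Fintype m] [DecidableEq m] [CommRing α]
    (A B : Matrix m m α) (h : IsUnit A.det) : A * (A⁻¹ * B * A) * A⁻¹ = B := by
  rw [← Matrix.mul_assoc, Matrix.mul_nonsing_inv_cancel_left _ _ h,
    Matrix.mul_nonsing_inv_cancel_right _ _ h]

theorem pd_feedback_cascade_general {n : ℕ}
    (Kp Kd : Matrix (Fin n) (Fin n) ℝ)
    (g₀ ξ₀ ξt epar W W' Y v : ℝ → Matrix (Fin n) (Fin n) ℝ)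
    (A : ℝ → (Matrix (Fin n) (Fin n) ℝ →ₗ[ℝ] Matrix (Fin n) (Fin n) ℝ))
    (hg₀unit : ∀ t, IsUnit (g₀ t))
    (hg₀' : ∀ t, HasDerivAt g₀ (g₀ t * ξ₀ t) t)
    (hW' : ∀ t, HasDerivAt W (W' t) t)
    (hepar' : ∀ t, HasDerivAt epar (g₀ t * ξt t * (g₀ t)⁻¹ + W t) t)
    (hY : ∀ t, Y t = (g₀ t)⁻¹ *
      (-(W' t) + Kp * epar t + Kd * (g₀ t * ξt t * (g₀ t)⁻¹ + W t)) * g₀ t)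
    (hv : ∀ t, v t = ξt t * ξ₀ t - ξ₀ t * ξt t + Y t - A t (ξt t))
    (hξt' : ∀ t, HasDerivAt ξt (A t (ξt t) + v t) t) :
    ∀ t, HasDerivAt epar (g₀ t * ξt t * (g₀ t)⁻¹ + W t) t ∧
      HasDerivAt (fun s => g₀ s * ξt s * (g₀ s)⁻¹ + W s)
        (Kp * epar t + Kd * (g₀ t * ξt t * (g₀ t)⁻¹ + W t)) t := by
  intro t
  refine ⟨hepar' t, ?_⟩
  have hdet : IsUnit (g₀ t).det := (Matrix.isUnit_iff_isUnit_det _).mp (hg₀unit t)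
  have hrate : A t (ξt t) + v t + (ξ₀ t * ξt t - ξt t * ξ₀ t) = Y t := by
    rw [hv t]
    abel
  refine (((hg₀' t).matrix_conj (hg₀unit t) (hξt' t)).add (hW' t)).congr_deriv ?_
  rw [hrate, hY t, Matrix.mul_mul_nonsing_inv_conj _ _ hdet]
  abel

/-- The closed-loop cascade identity in the proof of **Theorem 2**: under the PD-like
feedback, the function `η(t) = g₀(t) ξ̃(t) g₀(t)⁻¹ + W(t)` satisfies `e∥' = η` and
`η' = Kp e∥ + Kd η`. -/
theorem pd_feedback_cascade {n : ℕ}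
    (𝔤 : Submodule ℝ (Matrix (Fin n) (Fin n) ℝ))
    (Kp Kd : Matrix (Fin n) (Fin n) ℝ)
    (g₀ ξ₀ ξt epar W W' Y v : ℝ → Matrix (Fin n) (Fin n) ℝ)
    (A : ℝ → (Matrix (Fin n) (Fin n) ℝ →ₗ[ℝ] Matrix (Fin n) (Fin n) ℝ))
    (hg₀unit : ∀ t, IsUnit (g₀ t))
    (hg₀' : ∀ t, HasDerivAt g₀ (g₀ t * ξ₀ t) t)
    (hξ₀ : ∀ t, ξ₀ t ∈ 𝔤) (hξt : ∀ t, ξt t ∈ 𝔤)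
    (hW' : ∀ t, HasDerivAt W (W' t) t)
    (hepar' : ∀ t, HasDerivAt epar (g₀ t * ξt t * (g₀ t)⁻¹ + W t) t)
    (hY : ∀ t, Y t = (g₀ t)⁻¹ *
      (-(W' t) + Kp * epar t + Kd * (g₀ t * ξt t * (g₀ t)⁻¹ + W t)) * g₀ t)
    (hv : ∀ t, v t = ξt t * ξ₀ t - ξ₀ t * ξt t + Y t - A t (ξt t))
    (hξt' : ∀ t, HasDerivAt ξt (A t (ξt t) + v t) t) :
    ∀ t, HasDerivAt epar (g₀ t * ξt t * (g₀ t)⁻¹ + W t) t ∧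
      HasDerivAt (fun s => g₀ s * ξt s * (g₀ s)⁻¹ + W s)
        (Kp * epar t + Kd * (g₀ t * ξt t * (g₀ t)⁻¹ + W t)) t :=
  pd_feedback_cascade_general Kp Kd g₀ ξ₀ ξt epar W W' Y v A hg₀unit hg₀' hW' hepar' hY hv hξt'
end

section
/- Let 𝔤 ⊆ E be a linear subspace with orthogonal complement 𝔤ᗮ and orthogonal projection P⊥ onto 𝔤ᗮ. Let H : E → E be self-adjoint with H(𝔤ᗮ) ⊆ 𝔤ᗮ and λ_min‖y‖² ≤ ⟨H·y, y⟩ ≤ λ_max‖y‖² for all y ∈ 𝔤ᗮ, where 0 < λ_min ≤ λ_max. Let α, h > 0, let M ∈ E be symmetric with c₁·I ≼ M ≼ c₂·I (0 < c₁ ≤ c₂), let y ∈ 𝔤ᗮ, and set y⁺ = y − h·α·P⊥((H·y)·M⁻¹). Then, with 𝒱_d(z) := ⟨H·z, z⟩, one has 𝒱_d(y⁺) ≤ (1 − 2·α·h·λ_min/c₂ + α²·h²·λ_max²/c₁²)·𝒱_d(y). -/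
open scoped Matrix

attribute [local instance] Matrix.frobeniusNormedAddCommGroup Matrix.frobeniusNormedSpace

/-!
With `t = hα`, `w = (H y) M⁻¹` and `z = P⊥ w`, expanding the quadratic form gives
`𝒱_d(y - t z) = 𝒱_d(y) - 2t⟨H y, z⟩ + t²⟨H z, z⟩`. Since `H y ∈ 𝔤ᗮ` and `w - z ∈ 𝔤`, the
projection does not change the cross term: `⟨H y, z⟩ = ⟨w M, w⟩ ≥ ‖H y‖² / c₂`, while
`⟨H z, z⟩ ≤ λmax ‖z‖² ≤ λmax ‖w‖² ≤ λmax ‖H y‖² / c₁²`. Both bounds are closed by the fact that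
a symmetric map `T` with `λ ‖x‖² ≤ ⟨T x, x⟩ ≤ Λ ‖x‖²` on an invariant subspace satisfies
`λ ⟨T x, x⟩ ≤ ‖T x‖² ≤ Λ ⟨T x, x⟩` there, applied to `H` on `𝔤ᗮ` and to `w ↦ w M` on `E`.
-/

open scoped RealInnerProductSpace

section InnerProductSpace

variable {E : Type*} [NormedAddCommGroup E] [InnerProductSpace ℝ E]

theorem LinearMap.IsSymmetric.inner_map_sub_smul_self {T : E →ₗ[ℝ] E} (hT : T.IsSymmetric)
    (x z : E) (t : ℝ) :
    ⟪T (x - t • z), x - t • z⟫ = ⟪T x, x⟫ - 2 * t * ⟪T x, z⟫ + t ^ 2 * ⟪T z, z⟫ := by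
  have hzx : ⟪T z, x⟫ = ⟪T x, z⟫ := by rw [hT, real_inner_comm]
  simp only [map_sub, map_smul, inner_sub_left, inner_sub_right, real_inner_smul_left,
    real_inner_smul_right, hzx]
  ring

theorem mul_inner_le_norm_sq {u x : E} {c : ℝ} (hc : 0 ≤ c) (h : c * ‖x‖ ^ 2 ≤ ⟪u, x⟫) :
    c * ⟪u, x⟫ ≤ ‖u‖ ^ 2 := by
  have hsq : 0 ≤ ‖u - c • x‖ ^ 2 := sq_nonneg _
  rw [norm_sub_sq_real, real_inner_smul_right, norm_smul, mul_pow, Real.norm_eq_abs, sq_abs] at hsq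
  nlinarith [mul_le_mul_of_nonneg_left h hc]

theorem LinearMap.IsSymmetric.norm_sq_map_le_mul_inner {T : E →ₗ[ℝ] E} (hT : T.IsSymmetric)
    {K : Submodule ℝ E} (hTK : ∀ x ∈ K, T x ∈ K) (hpos : ∀ x ∈ K, 0 ≤ ⟪T x, x⟫) {c : ℝ}
    (hc : 0 < c) (hup : ∀ x ∈ K, ⟪T x, x⟫ ≤ c * ‖x‖ ^ 2) {x : E} (hx : x ∈ K) :
    ‖T x‖ ^ 2 ≤ c * ⟪T x, x⟫ := by
  have hTx := hTK x hx
  -- evaluate the nonnegative form at `x - c⁻¹ • T x`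
  have hnonneg := hpos _ (K.sub_mem hx (K.smul_mem c⁻¹ hTx))
  rw [hT.inner_map_sub_smul_self, real_inner_self_eq_norm_sq] at hnonneg
  have hTTx := mul_le_mul_of_nonneg_left (hup _ hTx) (sq_nonneg c⁻¹)
  have hcinv : c⁻¹ ^ 2 * (c * ‖T x‖ ^ 2) = c⁻¹ * ‖T x‖ ^ 2 := by field_simp
  have : c⁻¹ * ‖T x‖ ^ 2 ≤ ⟪T x, x⟫ := by linarith
  rwa [inv_mul_le_iff₀ hc] at this

theorem norm_le_norm_of_mem_orthogonal_of_sub_mem {𝔤 : Submodule ℝ E} {x p : E}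
    (hp : p ∈ 𝔤ᗮ) (hxp : x - p ∈ 𝔤) : ‖p‖ ≤ ‖x‖ := by
  have hpyth := norm_add_sq_eq_norm_sq_add_norm_sq_real (𝔤.inner_left_of_mem_orthogonal hxp hp)
  rw [add_sub_cancel] at hpyth
  rw [mul_self_le_mul_self_iff (norm_nonneg p) (norm_nonneg x), hpyth]
  exact le_add_of_nonneg_right (mul_self_nonneg _)

theorem inner_eq_of_mem_orthogonal_of_sub_mem {𝔤 : Submodule ℝ E} {a x p : E}
    (ha : a ∈ 𝔤ᗮ) (hxp : x - p ∈ 𝔤) : ⟪a, p⟫ = ⟪a, x⟫ := by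
  have h := 𝔤.inner_left_of_mem_orthogonal hxp ha
  rw [inner_sub_right, sub_eq_zero] at h
  exact h.symm

variable {𝔤 : Submodule ℝ E} {H S : E →ₗ[ℝ] E} {lmin lmax c₁ c₂ : ℝ} {y w z : E}

theorem inner_map_sub_smul_le_of_pinched (hH : H.IsSymmetric) (hH𝔤 : ∀ x ∈ 𝔤ᗮ, H x ∈ 𝔤ᗮ)
    (hlmin : 0 ≤ lmin) (hlmax : 0 < lmax) (hHlow : ∀ x ∈ 𝔤ᗮ, lmin * ‖x‖ ^ 2 ≤ ⟪H x, x⟫)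
    (hHup : ∀ x ∈ 𝔤ᗮ, ⟪H x, x⟫ ≤ lmax * ‖x‖ ^ 2) (hS : S.IsSymmetric) (hc₁ : 0 < c₁)
    (hc₂ : 0 < c₂) (hSlow : ∀ x, c₁ * ‖x‖ ^ 2 ≤ ⟪S x, x⟫) (hSup : ∀ x, ⟪S x, x⟫ ≤ c₂ * ‖x‖ ^ 2)
    (hy : y ∈ 𝔤ᗮ) (hw : S w = H y) (hz : z ∈ 𝔤ᗮ) (hwz : w - z ∈ 𝔤) {t : ℝ} (ht : 0 ≤ t) :
    ⟪H (y - t • z), y - t • z⟫ ≤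
      (1 - 2 * t * lmin / c₂ + t ^ 2 * lmax ^ 2 / c₁ ^ 2) * ⟪H y, y⟫ := by
  have hHpos : ∀ x ∈ 𝔤ᗮ, 0 ≤ ⟪H x, x⟫ := fun x hx =>
    (mul_nonneg hlmin (sq_nonneg _)).trans (hHlow x hx)
  have hSpos : ∀ x ∈ (⊤ : Submodule ℝ E), 0 ≤ ⟪S x, x⟫ := fun x _ =>
    (mul_nonneg hc₁.le (sq_nonneg _)).trans (hSlow x)
  have hHy_low : lmin * ⟪H y, y⟫ ≤ ‖H y‖ ^ 2 := mul_inner_le_norm_sq hlmin (hHlow y hy)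
  have hHy_up : ‖H y‖ ^ 2 ≤ lmax * ⟪H y, y⟫ :=
    hH.norm_sq_map_le_mul_inner hH𝔤 hHpos hlmax hHup hy
  have hcoer : c₁ * ‖w‖ ^ 2 ≤ ⟪H y, w⟫ := hw ▸ hSlow w
  have hHyw_low : c₁ * ⟪H y, w⟫ ≤ ‖H y‖ ^ 2 := mul_inner_le_norm_sq hc₁.le hcoer
  have hHyw_up : ‖H y‖ ^ 2 ≤ c₂ * ⟪H y, w⟫ :=
    hw ▸ hS.norm_sq_map_le_mul_inner (fun _ _ => Submodule.mem_top) hSpos hc₂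
      (fun x _ => hSup x) Submodule.mem_top
  have hcross : lmin * ⟪H y, y⟫ / c₂ ≤ ⟪H y, z⟫ := by
    rw [inner_eq_of_mem_orthogonal_of_sub_mem (hH𝔤 y hy) hwz, div_le_iff₀ hc₂]
    linarith
  have hquad : ⟪H z, z⟫ ≤ lmax ^ 2 * ⟪H y, y⟫ / c₁ ^ 2 := by
    have hzw : ‖z‖ ^ 2 ≤ ‖w‖ ^ 2 :=
      pow_le_pow_left₀ (norm_nonneg z) (norm_le_norm_of_mem_orthogonal_of_sub_mem hz hwz) 2
    have hw_le : c₁ ^ 2 * ‖w‖ ^ 2 ≤ lmax * ⟪H y, y⟫ := by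
      nlinarith [mul_le_mul_of_nonneg_left hcoer hc₁.le]
    rw [le_div_iff₀ (by positivity)]
    nlinarith [hHup z hz, mul_le_mul_of_nonneg_left hzw hlmax.le]
  calc ⟪H (y - t • z), y - t • z⟫
      = ⟪H y, y⟫ - 2 * t * ⟪H y, z⟫ + t ^ 2 * ⟪H z, z⟫ := hH.inner_map_sub_smul_self y z t
    _ ≤ ⟪H y, y⟫ - 2 * t * (lmin * ⟪H y, y⟫ / c₂) + t ^ 2 * (lmax ^ 2 * ⟪H y, y⟫ / c₁ ^ 2) := by
        gcongr
    _ = (1 - 2 * t * lmin / c₂ + t ^ 2 * lmax ^ 2 / c₁ ^ 2) * ⟪H y, y⟫ := by ring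

end InnerProductSpace

section Frobenius

variable {n : ℕ}

theorem fip_self_eq_norm_sq (A : Matrix (Fin n) (Fin n) ℝ) : fip A A = ‖A‖ ^ 2 := by
  rw [Matrix.frobenius_norm_def, ← Real.rpow_natCast, ← Real.rpow_mul (by positivity)]
  norm_num [fip, Matrix.trace, Matrix.mul_apply, Real.rpow_two, sq]
  exact Finset.sum_comm

noncomputable instance frobeniusInnerProductSpace :
    InnerProductSpace ℝ (Matrix (Fin n) (Fin n) ℝ) where
  inner := fip
  norm_sq_eq_re_inner A := (fip_self_eq_norm_sq A).symm
  conj_inner_symm A B := by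
    simp only [fip, conj_trivial]
    rw [← Matrix.trace_transpose, Matrix.transpose_mul, Matrix.transpose_transpose]
  add_left A B C := by simp [fip, Matrix.add_mul]
  smul_left A B c := by simp [fip]

theorem fip_eq_inner (A B : Matrix (Fin n) (Fin n) ℝ) : fip A B = ⟪A, B⟫ := rfl

theorem mperp_eq_orthogonal (𝔤 : Submodule ℝ (Matrix (Fin n) (Fin n) ℝ)) :
    mperp 𝔤 = 𝔤ᗮ := by
  ext y; exact Iff.rfl

theorem Matrix.IsSymm.mulRight_isSymmetric {M : Matrix (Fin n) (Fin n) ℝ} (hM : M.IsSymm) :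
    (LinearMap.mulRight ℝ M).IsSymmetric := by
  intro v w
  change fip (v * M) w = fip v (w * M)
  simp only [fip, Matrix.transpose_mul, hM.eq, Matrix.mul_assoc]
  rw [Matrix.trace_mul_comm, Matrix.mul_assoc]

theorem Matrix.PosSemidef.inner_mul_self_nonneg {N : Matrix (Fin n) (Fin n) ℝ}
    (hN : N.PosSemidef) (w : Matrix (Fin n) (Fin n) ℝ) : 0 ≤ ⟪w * N, w⟫ := by
  have htrace := (hN.mul_mul_conjTranspose_same w).trace_nonneg
  rw [Matrix.conjTranspose_eq_transpose_of_trivial, Matrix.mul_assoc, Matrix.trace_mul_comm,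
    ← Matrix.transpose_transpose N, ← Matrix.transpose_mul,
    ← hN.isHermitian.eq, Matrix.conjTranspose_eq_transpose_of_trivial] at htrace
  exact htrace

theorem mul_norm_sq_le_inner_mul_self {M : Matrix (Fin n) (Fin n) ℝ} {c : ℝ}
    (h : (M - c • 1).PosSemidef) (w : Matrix (Fin n) (Fin n) ℝ) : c * ‖w‖ ^ 2 ≤ ⟪w * M, w⟫ := by
  have := h.inner_mul_self_nonneg w
  rwa [Matrix.mul_sub, inner_sub_left, Matrix.mul_smul, Matrix.mul_one, real_inner_smul_left,
    real_inner_self_eq_norm_sq, sub_nonneg] at this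

theorem inner_mul_self_le_mul_norm_sq {M : Matrix (Fin n) (Fin n) ℝ} {c : ℝ}
    (h : (c • 1 - M).PosSemidef) (w : Matrix (Fin n) (Fin n) ℝ) : ⟪w * M, w⟫ ≤ c * ‖w‖ ^ 2 := by
  have := h.inner_mul_self_nonneg w
  rwa [Matrix.mul_sub, inner_sub_left, Matrix.mul_smul, Matrix.mul_one, real_inner_smul_left,
    real_inner_self_eq_norm_sq, sub_nonneg] at this

theorem isUnit_det_of_posSemidef_sub_smul_one {M : Matrix (Fin n) (Fin n) ℝ} {c : ℝ} (hc : 0 < c)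
    (h : (M - c • 1).PosSemidef) : IsUnit M.det := by
  have hpd := Matrix.PosDef.posSemidef_add h (Matrix.PosDef.one.smul hc)
  rw [sub_add_cancel] at hpd
  exact (Matrix.isUnit_iff_isUnit_det M).mp hpd.isUnit

end Frobenius

/-- The one-step Lyapunov decrease inequality in the proof of **Theorem 3**: for
`y ∈ 𝔤ᗮ` and the Euler step `y⁺ = y - hα P⊥((H y) M⁻¹)`, the discrete Lyapunov function
`𝒱_d(z) = ⟨H z, z⟩` satisfies
`𝒱_d(y⁺) ≤ (1 - 2αh λmin/c₂ + α²h² λmax²/c₁²) 𝒱_d(y)`. -/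
theorem discrete_lyapunov_one_step {n : ℕ}
    (𝔤 : Submodule ℝ (Matrix (Fin n) (Fin n) ℝ))
    (P : Matrix (Fin n) (Fin n) ℝ →ₗ[ℝ] Matrix (Fin n) (Fin n) ℝ)
    (hP : ∀ x, P x ∈ mperp 𝔤 ∧ x - P x ∈ 𝔤)
    (H : Matrix (Fin n) (Fin n) ℝ →ₗ[ℝ] Matrix (Fin n) (Fin n) ℝ)
    (hsa : ∀ v w, fip (H v) w = fip v (H w))
    (hHperp : ∀ y ∈ mperp 𝔤, H y ∈ mperp 𝔤)
    (lmin lmax : ℝ) (hlmin : 0 < lmin) (hlminmax : lmin ≤ lmax)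
    (hbound : ∀ y ∈ mperp 𝔤,
      lmin * ‖y‖ ^ 2 ≤ fip (H y) y ∧ fip (H y) y ≤ lmax * ‖y‖ ^ 2)
    (α h : ℝ) (hα : 0 < α) (hh : 0 < h)
    (M : Matrix (Fin n) (Fin n) ℝ) (hMsymm : M.IsSymm)
    (c₁ c₂ : ℝ) (hc₁ : 0 < c₁) (hc₁₂ : c₁ ≤ c₂)
    (hMlow : (M - c₁ • 1).PosSemidef)
    (hMup : ((c₂ • 1 : Matrix (Fin n) (Fin n) ℝ) - M).PosSemidef)
    (y : Matrix (Fin n) (Fin n) ℝ) (hy : y ∈ mperp 𝔤) :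
    fip (H (y - (h * α) • P (H y * M⁻¹))) (y - (h * α) • P (H y * M⁻¹)) ≤
      (1 - 2 * α * h * lmin / c₂ + α ^ 2 * h ^ 2 * lmax ^ 2 / c₁ ^ 2) * fip (H y) y := by
  simp only [fip_eq_inner, mperp_eq_orthogonal] at *
  have hw : LinearMap.mulRight ℝ M (H y * M⁻¹) = H y :=
    Matrix.nonsing_inv_mul_cancel_right M _ (isUnit_det_of_posSemidef_sub_smul_one hc₁ hMlow)
  have hstep := inner_map_sub_smul_le_of_pinched hsa hHperp hlmin.le
    (hlmin.trans_le hlminmax) (fun x hx => (hbound x hx).1) (fun x hx => (hbound x hx).2)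
    hMsymm.mulRight_isSymmetric hc₁ (hc₁.trans_le hc₁₂) (mul_norm_sq_le_inner_mul_self hMlow)
    (inner_mul_self_le_mul_norm_sq hMup) hy hw (hP _).1 (hP _).2 (mul_pos hh hα).le
  convert hstep using 2
  ring
end

section
/- Let 𝔤 ⊆ E be a linear subspace with orthogonal complement 𝔤ᗮ and orthogonal projection P⊥ onto 𝔤ᗮ. Let H : E → E be self-adjoint with H(𝔤ᗮ) ⊆ 𝔤ᗮ and λ_min‖y‖² ≤ ⟨H·y, y⟩ ≤ λ_max‖y‖² for all y ∈ 𝔤ᗮ, where 0 < λ_min ≤ λ_max. Let α, h > 0, let g : ℕ → E satisfy c₁·I ≼ gₖ·gₖᵀ ≼ c₂·I for all k with 0 < c₁ ≤ c₂, and let e : ℕ → 𝔤ᗮ satisfy the recursion e_{k+1} = e_k − h·α·P⊥((H·e_k)·(gₖ·gₖᵀ)⁻¹). If 0 < α·h < 2·λ_min·c₁²/(λ_max²·c₂), then e is exponentially stable to zero: there exist C ≥ 1 and ρ ∈ (0,1) such that ‖e_k‖ ≤ C·ρᵏ·‖e₀‖ for all k ∈ ℕ. -/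
open scoped Matrix

attribute [local instance] Matrix.frobeniusNormedAddCommGroup Matrix.frobeniusNormedSpace

namespace DTESaux

variable {n : ℕ}

lemma fip_comm (A B : Matrix (Fin n) (Fin n) ℝ) : fip A B = fip B A := by
  unfold fip
  rw [← Matrix.trace_transpose, Matrix.transpose_mul, Matrix.transpose_transpose]

lemma fip_add_left (A B C : Matrix (Fin n) (Fin n) ℝ) : fip (A + B) C = fip A C + fip B C := by
  simp [fip, Matrix.transpose_add, Matrix.add_mul]

lemma fip_add_right (A B C : Matrix (Fin n) (Fin n) ℝ) : fip A (B + C) = fip A B + fip A C := by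
  simp [fip, Matrix.mul_add]

lemma fip_smul_left (s : ℝ) (A B : Matrix (Fin n) (Fin n) ℝ) : fip (s • A) B = s * fip A B := by
  simp [fip, Matrix.transpose_smul, Matrix.smul_mul]

lemma fip_smul_right (s : ℝ) (A B : Matrix (Fin n) (Fin n) ℝ) : fip A (s • B) = s * fip A B := by
  simp [fip, Matrix.mul_smul]

lemma fip_self (A : Matrix (Fin n) (Fin n) ℝ) : fip A A = ‖A‖ ^ 2 := by
  have hs : (0:ℝ) ≤ ∑ i, ∑ j, ‖A i j‖ ^ (2:ℝ) := by positivity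
  have h1 : ‖A‖ ^ 2 = ∑ i, ∑ j, ‖A i j‖ ^ (2:ℝ) := by
    rw [Matrix.frobenius_norm_def]
    rw [← Real.rpow_natCast ((∑ i, ∑ j, ‖A i j‖ ^ (2:ℝ)) ^ ((1:ℝ)/2)) 2, ← Real.rpow_mul hs]
    norm_num
  rw [h1]
  simp [fip, Matrix.trace, Matrix.diag, Matrix.mul_apply, Real.norm_eq_abs,
    Real.rpow_natCast, sq_abs]
  rw [Finset.sum_comm]
  congr 1
  ext i
  congr 1
  ext j
  ring

lemma fip_expand (A B C D : Matrix (Fin n) (Fin n) ℝ) (s : ℝ) :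
    fip (A - s • B) (C - s • D) =
      fip A C - s * fip A D - s * fip B C + s ^ 2 * fip B D := by
  simp only [fip, Matrix.transpose_sub, Matrix.transpose_smul, Matrix.sub_mul, Matrix.mul_sub,
    Matrix.smul_mul, Matrix.mul_smul, Matrix.trace_sub, Matrix.trace_smul, smul_eq_mul]
  ring

lemma quad_sq_le (a b c : ℝ) (h : ∀ t : ℝ, 0 ≤ a + 2 * b * t + c * t ^ 2) : b ^ 2 ≤ a * c := by
  have h2 := discrim_le_zero (a := c) (b := 2 * b) (c := a) (fun x => by have := h x; nlinarith)
  unfold discrim at h2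
  nlinarith

lemma fip_cs (A B : Matrix (Fin n) (Fin n) ℝ) : fip A B ≤ ‖A‖ * ‖B‖ := by
  have h : ∀ t : ℝ, 0 ≤ fip A A + 2 * fip A B * t + fip B B * t ^ 2 := by
    intro t
    have h0 : (0:ℝ) ≤ fip (A + t • B) (A + t • B) := by rw [fip_self]; positivity
    have hexp : fip (A + t • B) (A + t • B)
        = fip A A + 2 * fip A B * t + fip B B * t ^ 2 := by
      rw [fip_add_left, fip_add_right, fip_add_right, fip_smul_left, fip_smul_left,
        fip_smul_right, fip_smul_right, fip_comm B A]
      ring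
    linarith [hexp ▸ h0]
  have h2 := quad_sq_le _ _ _ h
  rw [fip_self, fip_self] at h2
  nlinarith [norm_nonneg A, norm_nonneg B, mul_nonneg (norm_nonneg A) (norm_nonneg B)]

lemma tpsd (A : Matrix (Fin n) (Fin n) ℝ) : (Aᵀ * A).PosSemidef := by
  have := Matrix.posSemidef_conjTranspose_mul_self A
  rwa [Matrix.conjTranspose_eq_transpose_of_trivial] at this

lemma psd_trace_nonneg {S : Matrix (Fin n) (Fin n) ℝ} (hS : S.PosSemidef) : 0 ≤ S.trace := by
  rw [Matrix.trace]
  refine Finset.sum_nonneg fun i _ => ?_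
  exact hS.diag_nonneg

open scoped MatrixOrder in
lemma psd_trace_mul_nonneg {S T : Matrix (Fin n) (Fin n) ℝ} (hS : S.PosSemidef)
    (hT : T.PosSemidef) : 0 ≤ (S * T).trace := by
  have hs : CFC.sqrt S * CFC.sqrt S = S := CFC.sqrt_mul_sqrt_self S hS.nonneg
  have hherm : (CFC.sqrt S).conjTranspose = CFC.sqrt S := (Matrix.nonneg_iff_posSemidef.mp (CFC.sqrt_nonneg S)).1
  have hpsd : ((CFC.sqrt S)ᴴ * T * CFC.sqrt S).PosSemidef := hT.conjTranspose_mul_mul_same _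
  rw [hherm] at hpsd
  have := psd_trace_nonneg hpsd
  rw [Matrix.trace_mul_comm, ← mul_assoc, hs] at this
  exact this

lemma trace_mul_ge {S G : Matrix (Fin n) (Fin n) ℝ} (hS : S.PosSemidef) {c : ℝ}
    (h : (G - c • 1).PosSemidef) : c * S.trace ≤ (S * G).trace := by
  have h0 := psd_trace_mul_nonneg hS h
  have hexp : S * (G - c • (1 : Matrix (Fin n) (Fin n) ℝ)) = S * G - c • S := by
    rw [Matrix.mul_sub, Matrix.mul_smul, Matrix.mul_one]
  rw [hexp, Matrix.trace_sub, Matrix.trace_smul, smul_eq_mul] at h0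
  linarith

lemma trace_mul_le {S G : Matrix (Fin n) (Fin n) ℝ} (hS : S.PosSemidef) {c : ℝ}
    (h : ((c • 1 : Matrix (Fin n) (Fin n) ℝ) - G).PosSemidef) : (S * G).trace ≤ c * S.trace := by
  have h0 := psd_trace_mul_nonneg hS h
  have hexp : S * ((c • 1 : Matrix (Fin n) (Fin n) ℝ) - G) = c • S - S * G := by
    rw [Matrix.mul_sub, Matrix.mul_smul, Matrix.mul_one]
  rw [hexp, Matrix.trace_sub, Matrix.trace_smul, smul_eq_mul] at h0
  linarith

lemma trace_quad_expand (X w G : Matrix (Fin n) (Fin n) ℝ) (hGsym : Gᵀ = G) (s : ℝ) :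
    (((X + s • w)ᵀ * (X + s • w)) * G).trace
      = ((Xᵀ * X) * G).trace + 2 * ((Xᵀ * w) * G).trace * s + ((wᵀ * w) * G).trace * s ^ 2 := by
  have hsw : ((wᵀ * X) * G).trace = ((Xᵀ * w) * G).trace := by
    conv_lhs => rw [← Matrix.trace_transpose]
    rw [Matrix.transpose_mul, Matrix.transpose_mul, Matrix.transpose_transpose, hGsym,
      Matrix.trace_mul_comm]
  simp only [Matrix.transpose_add, Matrix.transpose_smul, Matrix.add_mul, Matrix.mul_add,
    Matrix.smul_mul, Matrix.mul_smul, Matrix.trace_add, Matrix.trace_smul, smul_eq_mul]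
  rw [hsw]
  ring

end DTESaux

set_option maxHeartbeats 1000000 in
/-- **Theorem 3**: Euler's discretization (14a) of the linearized transversal
tracking-error dynamics, `e_{k+1} = e_k - hα P⊥((H e_k)(g_k g_kᵀ)⁻¹)`, is exponentially
stable to zero provided `0 < αh < 2 λmin c₁² / (λmax² c₂)`. -/
theorem discrete_transversal_exponentially_stable {n : ℕ}
    (𝔤 : Submodule ℝ (Matrix (Fin n) (Fin n) ℝ))
    (P : Matrix (Fin n) (Fin n) ℝ →ₗ[ℝ] Matrix (Fin n) (Fin n) ℝ)
    (hP : ∀ x, P x ∈ mperp 𝔤 ∧ x - P x ∈ 𝔤)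
    (H : Matrix (Fin n) (Fin n) ℝ →ₗ[ℝ] Matrix (Fin n) (Fin n) ℝ)
    (hsa : ∀ v w, fip (H v) w = fip v (H w))
    (hHperp : ∀ y ∈ mperp 𝔤, H y ∈ mperp 𝔤)
    (lmin lmax : ℝ) (hlmin : 0 < lmin) (hlminmax : lmin ≤ lmax)
    (hbound : ∀ y ∈ mperp 𝔤,
      lmin * ‖y‖ ^ 2 ≤ fip (H y) y ∧ fip (H y) y ≤ lmax * ‖y‖ ^ 2)
    (α h : ℝ) (hα : 0 < α) (hh : 0 < h)
    (c₁ c₂ : ℝ) (hc₁ : 0 < c₁) (hc₁₂ : c₁ ≤ c₂)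
    (g : ℕ → Matrix (Fin n) (Fin n) ℝ)
    (hg : ∀ k, (g k * (g k)ᵀ - c₁ • 1).PosSemidef ∧
      ((c₂ • 1 : Matrix (Fin n) (Fin n) ℝ) - g k * (g k)ᵀ).PosSemidef)
    (e : ℕ → Matrix (Fin n) (Fin n) ℝ)
    (he : ∀ k, e k ∈ mperp 𝔤)
    (hrec : ∀ k, e (k + 1) = e k - (h * α) • P (H (e k) * (g k * (g k)ᵀ)⁻¹))
    (hstep : 0 < α * h) (hstep' : α * h < 2 * lmin * c₁ ^ 2 / (lmax ^ 2 * c₂)) :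
    ∃ C : ℝ, 1 ≤ C ∧ ∃ ρ : ℝ, 0 < ρ ∧ ρ < 1 ∧
      ∀ k : ℕ, ‖e k‖ ≤ C * ρ ^ k * ‖e 0‖ := by
  classical
  have hlmax : 0 < lmax := lt_of_lt_of_le hlmin hlminmax
  have hc₂ : 0 < c₂ := lt_of_lt_of_le hc₁ hc₁₂
  set t : ℝ := h * α with ht_def
  have ht : 0 < t := mul_pos hh hα
  have htl : t * lmax < 2 * c₁ := by
    have h1 : α * h < 2 * c₁ / lmax := by
      refine lt_of_lt_of_le hstep' ?_
      rw [div_le_div_iff₀ (by positivity) (by positivity)]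
      nlinarith [mul_le_mul_of_nonneg_left (mul_le_mul hlminmax hc₁₂ hc₁.le hlmax.le)
        (by positivity : (0:ℝ) ≤ 2 * c₁ * lmax)]
    have h2 : α * h * lmax < 2 * c₁ := (lt_div_iff₀ hlmax).1 h1
    calc t * lmax = α * h * lmax := by rw [ht_def, mul_comm h α]
    _ < 2 * c₁ := h2
  set κ : ℝ := t * (2 * c₁ - t * lmax) * lmin / c₂ ^ 2 with hκ_def
  have hκpos : 0 < κ := by
    apply div_pos
    · apply mul_pos (mul_pos ht (by linarith)) hlmin
    · positivity
  set r : ℝ := max (1 - κ) (1 / 4 : ℝ) with hr_def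
  have hr0 : (0:ℝ) < r := lt_of_lt_of_le (by norm_num) (le_max_right _ _)
  have hr1 : r < 1 := max_lt (by linarith) (by norm_num)
  set V : ℕ → ℝ := fun k => fip (H (e k)) (e k) with hV_def
  have hVlow : ∀ k, lmin * ‖e k‖ ^ 2 ≤ V k := fun k => (hbound _ (he k)).1
  have hVhigh : ∀ k, V k ≤ lmax * ‖e k‖ ^ 2 := fun k => (hbound _ (he k)).2
  have hVnn : ∀ k, 0 ≤ V k := fun k => le_trans (by positivity) (hVlow k)
  -- the one-step decrease
  have step : ∀ k, V (k + 1) ≤ r * V k := by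
    intro k
    set X : Matrix (Fin n) (Fin n) ℝ := H (e k) with hX_def
    set G : Matrix (Fin n) (Fin n) ℝ := g k * (g k)ᵀ with hG_def
    set w : Matrix (Fin n) (Fin n) ℝ := X * G⁻¹ with hw_def
    have hXperp : X ∈ mperp 𝔤 := hHperp _ (he k)
    obtain ⟨hPwperp, hPwg⟩ := hP w
    have hG1 : (G - c₁ • 1).PosSemidef := (hg k).1
    have hG2 : ((c₂ • 1 : Matrix (Fin n) (Fin n) ℝ) - G).PosSemidef := (hg k).2
    have hone : (Matrix.PosDef (c₁ • 1 : Matrix (Fin n) (Fin n) ℝ)) := by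
      refine Matrix.PosDef.of_dotProduct_mulVec_pos ?_ (fun x hx => ?_)
      · simp [Matrix.IsHermitian, Matrix.conjTranspose_smul]
      · have hx' : 0 < dotProduct (star x) x :=
          Matrix.dotProduct_star_self_pos_iff.mpr hx
        simpa [Matrix.smul_mulVec, Matrix.one_mulVec, dotProduct_smul] using
          mul_pos hc₁ hx'
    have hGpd : G.PosDef := by
      have hsum : G = (c₁ • 1 : Matrix (Fin n) (Fin n) ℝ) + (G - c₁ • 1) := by abel
      rw [hsum]
      exact hone.add_posSemidef hG1
    have hGpsd : G.PosSemidef := hGpd.posSemidef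
    have hdet : IsUnit G.det := isUnit_iff_ne_zero.mpr hGpd.det_pos.ne'
    have hwG : w * G = X := by
      rw [hw_def, mul_assoc, Matrix.nonsing_inv_mul _ hdet, mul_one]
    have hGsym : Gᵀ = G := by
      rw [hG_def, Matrix.transpose_mul, Matrix.transpose_transpose]
    -- fip X w = trace ((wᵀ w) G)
    have hfipXw : fip X w = ((wᵀ * w) * G).trace := by
      conv_lhs => rw [fip, ← hwG]
      rw [Matrix.transpose_mul, hGsym, mul_assoc, Matrix.trace_mul_comm, mul_assoc]
    -- c₁ ‖w‖² ≤ fip X w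
    have hb1 : c₁ * ‖w‖ ^ 2 ≤ fip X w := by
      have := DTESaux.trace_mul_ge (DTESaux.tpsd w) hG1
      rw [hfipXw, ← DTESaux.fip_self]
      exact this
    -- fip X (P w) = fip X w
    have hcross : fip X (P w) = fip X w := by
      have h0 : fip (w - P w) X = 0 := hXperp _ hPwg
      have h0' : fip X (w - P w) = 0 := by rw [DTESaux.fip_comm]; exact h0
      have hsplit : fip X w = fip X (P w) + fip X (w - P w) := by
        rw [← DTESaux.fip_add_right]
        congr 1
        abel
      rw [hsplit, h0', add_zero]
    -- ‖P w‖² ≤ ‖w‖²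
    have hPwle : ‖P w‖ ^ 2 ≤ ‖w‖ ^ 2 := by
      have h0 : fip (w - P w) (P w) = 0 := hPwperp _ hPwg
      have h0' : fip (P w) (w - P w) = 0 := by rw [DTESaux.fip_comm]; exact h0
      have hexp : fip (P w + (w - P w)) (P w + (w - P w))
          = fip (P w) (P w) + fip (w - P w) (w - P w) := by
        rw [DTESaux.fip_add_left, DTESaux.fip_add_right, DTESaux.fip_add_right, h0, h0']
        ring
      have hww : P w + (w - P w) = w := by abel
      rw [hww, DTESaux.fip_self, DTESaux.fip_self, DTESaux.fip_self] at hexp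
      nlinarith [sq_nonneg ‖w - P w‖]
    -- quadratic term bound
    have hquad : fip (H (P w)) (P w) ≤ lmax * ‖w‖ ^ 2 :=
      le_trans (hbound _ hPwperp).2 (by nlinarith)
    -- Cauchy–Schwarz for the G-weighted form
    have hXwG : ((Xᵀ * w) * G).trace = ‖X‖ ^ 2 := by
      rw [mul_assoc, hwG, ← DTESaux.fip_self]
      rfl
    have hBcs : (‖X‖ ^ 2) ^ 2 ≤ ((Xᵀ * X) * G).trace * ((wᵀ * w) * G).trace := by
      apply DTESaux.quad_sq_le
      intro s
      have hpsd : (0:ℝ) ≤ (((X + s • w)ᵀ * (X + s • w)) * G).trace :=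
        DTESaux.psd_trace_mul_nonneg (DTESaux.tpsd _) hGpsd
      have hexp := DTESaux.trace_quad_expand X w G hGsym s
      rw [hexp, hXwG] at hpsd
      exact hpsd
    have hXXG : ((Xᵀ * X) * G).trace ≤ c₂ * ‖X‖ ^ 2 := by
      have := DTESaux.trace_mul_le (DTESaux.tpsd X) hG2
      rwa [show (Xᵀ * X).trace = ‖X‖ ^ 2 from DTESaux.fip_self X] at this
    have hwwG : ((wᵀ * w) * G).trace ≤ c₂ * ‖w‖ ^ 2 := by
      have := DTESaux.trace_mul_le (DTESaux.tpsd w) hG2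
      rwa [show (wᵀ * w).trace = ‖w‖ ^ 2 from DTESaux.fip_self w] at this
    have hXXG0 : 0 ≤ ((Xᵀ * X) * G).trace := DTESaux.psd_trace_mul_nonneg (DTESaux.tpsd X) hGpsd
    have hwwG0 : 0 ≤ ((wᵀ * w) * G).trace := DTESaux.psd_trace_mul_nonneg (DTESaux.tpsd w) hGpsd
    -- ‖X‖² ≤ c₂² ‖w‖²
    have hX2 : ‖X‖ ^ 2 ≤ c₂ ^ 2 * ‖w‖ ^ 2 := by
      have h4 : (‖X‖ ^ 2) ^ 2 ≤ (c₂ * ‖X‖ ^ 2) * (c₂ * ‖w‖ ^ 2) :=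
        le_trans hBcs (mul_le_mul hXXG hwwG hwwG0 (by positivity))
      by_cases hX0 : ‖X‖ = 0
      · rw [hX0]
        norm_num
        positivity
      · have hXpos : 0 < ‖X‖ ^ 2 := by positivity
        have h4' : ‖X‖ ^ 2 * (‖X‖ ^ 2) ≤ ‖X‖ ^ 2 * (c₂ ^ 2 * ‖w‖ ^ 2) := by nlinarith [h4]
        exact le_of_mul_le_mul_left h4' hXpos
    -- lmin V ≤ ‖X‖²
    have hlV : lmin * V k ≤ ‖X‖ ^ 2 := by
      have h1 : lmin * ‖e k‖ ^ 2 ≤ V k := hVlow k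
      have h2 : V k ≤ ‖X‖ * ‖e k‖ := DTESaux.fip_cs X (e k)
      nlinarith [norm_nonneg X, norm_nonneg (e k), sq_nonneg (‖X‖ - lmin * ‖e k‖)]
    -- lower bound on ‖w‖²
    have hwlow : lmin * V k / c₂ ^ 2 ≤ ‖w‖ ^ 2 := by
      rw [div_le_iff₀ (by positivity)]
      nlinarith
    -- expansion of V (k+1)
    have hVexp : V (k + 1) = V k - 2 * t * fip X (P w) + t ^ 2 * fip (H (P w)) (P w) := by
      have hrk : e (k + 1) = e k - t • P w := hrec k
      show fip (H (e (k + 1))) (e (k + 1)) = _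
      rw [hrk, map_sub, map_smul]
      rw [DTESaux.fip_expand]
      have hcr : fip (H (P w)) (e k) = fip X (P w) := by
        rw [hsa, DTESaux.fip_comm]
      rw [hcr]
      have hcr2 : fip (H (e k)) (P w) = fip X (P w) := rfl
      rw [hcr2]
      ring
    have hstepk : V (k + 1) ≤ V k - t * (2 * c₁ - t * lmax) * ‖w‖ ^ 2 := by
      rw [hVexp, hcross]
      nlinarith [mul_le_mul_of_nonneg_left hb1 (by linarith : (0:ℝ) ≤ 2 * t),
        mul_le_mul_of_nonneg_left hquad (sq_nonneg t)]
    have hcoef : 0 ≤ t * (2 * c₁ - t * lmax) := by nlinarith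
    have h5 : t * (2 * c₁ - t * lmax) * (lmin * V k / c₂ ^ 2)
        ≤ t * (2 * c₁ - t * lmax) * ‖w‖ ^ 2 := mul_le_mul_of_nonneg_left hwlow hcoef
    have h7 : V k - t * (2 * c₁ - t * lmax) * (lmin * V k / c₂ ^ 2) = (1 - κ) * V k := by
      rw [hκ_def]
      field_simp
    have h8 : (1 - κ) * V k ≤ r * V k :=
      mul_le_mul_of_nonneg_right (le_max_left _ _) (hVnn k)
    linarith
  -- iterate
  have decay : ∀ k, V k ≤ r ^ k * V 0 := by
    intro k
    induction k with
    | zero => simp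
    | succ k ih =>
      calc V (k + 1) ≤ r * V k := step k
      _ ≤ r * (r ^ k * V 0) := mul_le_mul_of_nonneg_left ih hr0.le
      _ = r ^ (k + 1) * V 0 := by ring
  refine ⟨Real.sqrt (lmax / lmin), ?_, Real.sqrt r, ?_, ?_, ?_⟩
  · rw [Real.one_le_sqrt]
    rw [le_div_iff₀ hlmin]
    linarith
  · exact Real.sqrt_pos.2 hr0
  · have := Real.sqrt_lt_sqrt hr0.le hr1
    rwa [Real.sqrt_one] at this
  · intro k
    have h1 : lmin * ‖e k‖ ^ 2 ≤ r ^ k * (lmax * ‖e 0‖ ^ 2) :=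
      le_trans (hVlow k) (le_trans (decay k)
        (mul_le_mul_of_nonneg_left (hVhigh 0) (pow_nonneg hr0.le k)))
    have hC2 : Real.sqrt (lmax / lmin) ^ 2 = lmax / lmin := Real.sq_sqrt (by positivity)
    have hρ2 : (Real.sqrt r ^ k) ^ 2 = r ^ k := by
      rw [← pow_mul, mul_comm k 2, pow_mul, Real.sq_sqrt hr0.le]
    have hsq : ‖e k‖ ^ 2 ≤ (Real.sqrt (lmax / lmin) * Real.sqrt r ^ k * ‖e 0‖) ^ 2 := by
      rw [mul_pow, mul_pow, hC2, hρ2, div_mul_eq_mul_div, div_mul_eq_mul_div, le_div_iff₀ hlmin]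
      nlinarith
    exact (pow_le_pow_iff_left₀ (norm_nonneg _) (by positivity) two_ne_zero).1 hsq
end
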